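/- arXiv:2601.12816 — 2 statements merged into one kernel-verified Lean document; each statement's English description precedes it below -/
import Mathlib

section
/- Let p : ℝ^d → (Fin n → ℝ) be a finite parametric family of positive probability mass functions that is twice continuously differentiable in θ, and fix θ ∈ ℝ^d. Then the KL divergence admits the local quadratic expansion KL(p(θ) ‖ p(θ+v)) = (1/2) vᵀ F(θ) v + o(‖v‖²) as v → 0; that is, (KL(p(θ) ‖ p(θ+v)) − (1/2) vᵀ F(θ) v) / ‖v‖² → 0 as v → 0, where F(θ) is the Fisher information matrix of the family at θ. -/
open Matrix

/-- The Fisher information matrix of a finite parametric family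
`p : ℝ^d → (Fin n → ℝ)` at parameter `θ`. -/
noncomputable def fisherMatrix {d n : ℕ} (p : (Fin d → ℝ) → Fin n → ℝ)
    (θ : Fin d → ℝ) : Matrix (Fin d) (Fin d) ℝ :=
  Matrix.of fun i j => ∑ y : Fin n,
    p θ y * (fderiv ℝ (fun θ' => Real.log (p θ' y)) θ (Pi.single i 1)) *
      (fderiv ℝ (fun θ' => Real.log (p θ' y)) θ (Pi.single j 1))

/-- KL divergence between two positive probability mass functions on `Fin n`. -/
noncomputable def klDiv {n : ℕ} (q r : Fin n → ℝ) : ℝ :=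
  ∑ y : Fin n, q y * Real.log (q y / r y)

open Filter Asymptotics Metric

set_option maxHeartbeats 1000000
set_option synthInstance.maxHeartbeats 400000

lemma peano_quadratic {E : Type*} [NormedAddCommGroup E] [NormedSpace ℝ E]
    (g : E → ℝ) (B : E →L[ℝ] E →L[ℝ] ℝ)
    (hg : Differentiable ℝ g) (hg0 : g 0 = 0) (hg'0 : fderiv ℝ g 0 = 0)
    (hB : HasFDerivAt (fderiv ℝ g) B 0) (hsymm : ∀ v w, B v w = B w v) :
    Filter.Tendsto (fun v => (g v - (1/2 : ℝ) * B v v) / ‖v‖ ^ 2)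
      (nhdsWithin 0 {0}ᶜ) (nhds 0) := by
  have hr : ∀ u : E, HasFDerivAt (fun v => g v - (1/2 : ℝ) * B v v)
      (fderiv ℝ g u - B u) u := by
    intro u
    have hbil0 := HasFDerivAt.comp (g := fun p : E × E => B p.1 p.2)
        (f := fun v : E => (v, v)) u
        (B.isBoundedBilinearMap.hasFDerivAt (u, u))
        ((hasFDerivAt_id u).prodMk (hasFDerivAt_id u))
    have hbil : HasFDerivAt (fun v : E => B v v)
        ((B.isBoundedBilinearMap.deriv (u, u)).comp
          ((ContinuousLinearMap.id ℝ E).prod (ContinuousLinearMap.id ℝ E))) u := hbil0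
    have h2 : HasFDerivAt (fun v : E => (1/2 : ℝ) * B v v)
        ((1/2 : ℝ) • ((B.isBoundedBilinearMap.deriv (u, u)).comp
          ((ContinuousLinearMap.id ℝ E).prod (ContinuousLinearMap.id ℝ E)))) u :=
      hbil.const_mul _
    have heq : (1/2 : ℝ) • ((B.isBoundedBilinearMap.deriv (u, u)).comp
        ((ContinuousLinearMap.id ℝ E).prod (ContinuousLinearMap.id ℝ E))) = B u := by
      ext w
      simp [IsBoundedBilinearMap.deriv_apply, hsymm w u]
      ring
    rw [heq] at h2
    exact ((hg u).hasFDerivAt).sub h2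
  have hlo : (fun v => g v - (1/2 : ℝ) * B v v) =o[nhds (0 : E)] fun v => ‖v‖ ^ 2 := by
    rw [isLittleO_iff]
    intro c hc
    have h1 : (fun v => fderiv ℝ g v - B v) =o[nhds (0 : E)] fun v => v := by
      have := hasFDerivAt_iff_isLittleO_nhds_zero.mp hB
      simpa [hg'0] using this
    rw [isLittleO_iff] at h1
    rcases Metric.eventually_nhds_iff.mp (h1 hc) with ⟨δ, hδ, hball⟩
    filter_upwards [Metric.ball_mem_nhds (0 : E) hδ] with v hv
    have hvδ : ‖v‖ < δ := by simpa [dist_eq_norm] using hv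
    have key : ‖(g v - (1/2 : ℝ) * B v v) - (g 0 - (1/2 : ℝ) * B 0 0)‖
        ≤ c * ‖v‖ * ‖v - 0‖ := by
      apply (convex_closedBall (0 : E) ‖v‖).norm_image_sub_le_of_norm_hasFDerivWithin_le
        (f' := fun u => fderiv ℝ g u - B u)
        (fun u _ => (hr u).hasFDerivWithinAt) ?_ (mem_closedBall_self (norm_nonneg v)) ?_
      · intro u hu
        have hun : ‖u‖ ≤ ‖v‖ := by simpa [dist_eq_norm] using hu
        have := hball (show dist u 0 < δ by
          simpa [dist_eq_norm] using lt_of_le_of_lt hun hvδ)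
        calc ‖fderiv ℝ g u - B u‖ ≤ c * ‖u‖ := by simpa using this
          _ ≤ c * ‖v‖ := by nlinarith [norm_nonneg u, norm_nonneg v]
      · simp [mem_closedBall, dist_eq_norm]
    simp only [hg0, map_zero, ContinuousLinearMap.zero_apply, mul_zero, sub_zero] at key
    calc ‖g v - (1/2 : ℝ) * B v v‖ ≤ c * ‖v‖ * ‖v‖ := key
      _ = c * ‖‖v‖ ^ 2‖ := by rw [Real.norm_of_nonneg (by positivity)]; ring
  exact (hlo.mono nhdsWithin_le_nhds).tendsto_div_nhds_zero

/-- **Local quadratic approximation of the KL divergence** (Theorem 2):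
`KL(p(θ) ‖ p(θ+v)) = (1/2) vᵀ F(θ) v + o(‖v‖²)` as `v → 0`. -/
theorem kl_local_quadratic_approx
    {d n : ℕ} (p : (Fin d → ℝ) → Fin n → ℝ)
    (hp_pos : ∀ θ y, 0 < p θ y)
    (hp_sum : ∀ θ, ∑ y, p θ y = 1)
    (hp_smooth : ContDiff ℝ 2 p)
    (θ : Fin d → ℝ) :
    Filter.Tendsto
      (fun v : Fin d → ℝ =>
        (klDiv (p θ) (p (θ + v)) - (1 / 2) * (v ⬝ᵥ (fisherMatrix p θ *ᵥ v))) / ‖v‖ ^ 2)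
      (nhdsWithin 0 {0}ᶜ) (nhds 0) := by
  classical
  -- component smoothness
  have hpc : ∀ y : Fin n, ContDiff ℝ 2 (fun u => p u y) := fun y =>
    (ContinuousLinearMap.proj y : ((Fin n → ℝ)) →L[ℝ] ℝ).contDiff.comp hp_smooth
  set q : Fin n → ℝ := p θ with hqdef
  have hq0 : ∀ y, q y ≠ 0 := fun y => (hp_pos θ y).ne'
  set D : Fin n → (Fin d → ℝ) → ((Fin d → ℝ) →L[ℝ] ℝ) :=
    fun y u => fderiv ℝ (fun u' => p u' y) u with hDdef
  have hD : ∀ y u, HasFDerivAt (fun u' => p u' y) (D y u) u := fun y u =>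
    (((hpc y).differentiable two_ne_zero) u).hasFDerivAt
  have hDdiff : ∀ y, Differentiable ℝ (D y) := fun y =>
    ((hpc y).fderiv_right (m := 1) (by norm_num)).differentiable one_ne_zero
  set D2 : Fin n → ((Fin d → ℝ) →L[ℝ] ((Fin d → ℝ) →L[ℝ] ℝ)) :=
    fun y => fderiv ℝ (D y) θ with hD2def
  have hD2 : ∀ y, HasFDerivAt (D y) (D2 y) θ := fun y => ((hDdiff y) θ).hasFDerivAt
  have hsumD : ∀ u, ∑ y, D y u = 0 := by
    intro u
    have h1 : HasFDerivAt (fun u' => ∑ y, p u' y) (∑ y, D y u) u :=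
      HasFDerivAt.fun_sum fun y _ => hD y u
    have he : (fun u' => ∑ y, p u' y) = fun _ => (1 : ℝ) := funext fun u' => hp_sum u'
    rw [he] at h1
    exact h1.unique (hasFDerivAt_const 1 u)
  have hsumD2 : ∑ y, D2 y = 0 := by
    have h1 : HasFDerivAt (fun u => ∑ y, D y u) (∑ y, D2 y) θ :=
      HasFDerivAt.fun_sum fun y _ => hD2 y
    have he : (fun u => ∑ y, D y u) = fun _ => 0 := funext hsumD
    rw [he] at h1
    exact h1.unique (hasFDerivAt_const 0 θ)
  set F1 : (Fin d → ℝ) → ℝ := fun u => ∑ y, q y * Real.log (p u y) with hF1def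
  set F1' : (Fin d → ℝ) → ((Fin d → ℝ) →L[ℝ] ℝ) :=
    fun u => ∑ y, (q y * (p u y)⁻¹) • D y u with hF1'def
  have hF1 : ∀ u, HasFDerivAt F1 (F1' u) u := by
    intro u
    apply HasFDerivAt.fun_sum
    intro y _
    have h := ((hD y u).log (hp_pos u y).ne').const_mul (q y)
    rw [smul_smul] at h
    exact h
  have hF1'θ : F1' θ = 0 := by
    have he : ∀ y ∈ Finset.univ, (q y * (p θ y)⁻¹) • D y θ = D y θ := fun y _ => by
      rw [show p θ y = q y from rfl, mul_inv_cancel₀ (hq0 y), one_smul]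
    have h1 : F1' θ = ∑ y, D y θ := Finset.sum_congr rfl he
    rw [h1, hsumD θ]
  set B0 : (Fin d → ℝ) →L[ℝ] ((Fin d → ℝ) →L[ℝ] ℝ) :=
    ∑ y, ((-(q y)⁻¹ : ℝ) • D y θ).smulRight (D y θ) with hB0def
  have hF1'' : HasFDerivAt F1' B0 θ := by
    have h1 : HasFDerivAt F1'
        (∑ y, (D2 y + ((-(q y)⁻¹ : ℝ) • D y θ).smulRight (D y θ))) θ := by
      apply HasFDerivAt.fun_sum
      intro y _
      have hinv : HasFDerivAt (fun u => (p u y)⁻¹) ((-(p θ y ^ 2)⁻¹ : ℝ) • D y θ) θ :=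
        (hasDerivAt_inv (hp_pos θ y).ne').comp_hasFDerivAt θ (hD y θ)
      have hc := hinv.const_mul (q y)
      have hs := hc.fun_smul (hD2 y)
      convert hs using 1
      have h2 : q y * (p θ y)⁻¹ = 1 := mul_inv_cancel₀ (hq0 y)
      have hsc : (-(q y)⁻¹ : ℝ) = q y * -(p θ y ^ 2)⁻¹ := by
        rw [show p θ y = q y from rfl, pow_two, mul_inv, mul_neg, ← mul_assoc,
          mul_inv_cancel₀ (hq0 y), one_mul]
      rw [h2, one_smul, hsc, ← smul_smul]
    have hz : ∀ w w' : Fin d → ℝ, ∑ y, D2 y w w' = 0 := by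
      intro w w'
      have h3 : ((∑ y, D2 y) w) w' = ∑ y, D2 y w w' := by
        rw [ContinuousLinearMap.sum_apply, ContinuousLinearMap.sum_apply]
      rw [← h3, hsumD2]
      simp
    have h2 : (∑ y, (D2 y + ((-(q y)⁻¹ : ℝ) • D y θ).smulRight (D y θ))) = B0 := by
      ext w w'
      rw [hB0def]
      simp only [ContinuousLinearMap.sum_apply, ContinuousLinearMap.add_apply]
      rw [Finset.sum_add_distrib, hz w w', zero_add]
    rwa [h2] at h1
  set g : (Fin d → ℝ) → ℝ := fun v => klDiv (p θ) (p (θ + v)) with hgdef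
  have hgeq : g = fun v => F1 θ - F1 (θ + v) := by
    funext v
    rw [hgdef, hF1def]
    simp only [klDiv]
    rw [← Finset.sum_sub_distrib]
    apply Finset.sum_congr rfl
    intro y _
    rw [Real.log_div (hq0 y) (hp_pos (θ + v) y).ne']
    ring
  have htrans : ∀ v : Fin d → ℝ, HasFDerivAt (fun w : Fin d → ℝ => θ + w)
      (ContinuousLinearMap.id ℝ (Fin d → ℝ)) v := fun v => (hasFDerivAt_id v).const_add θ
  have hg' : ∀ v, HasFDerivAt g (-(F1' (θ + v))) v := by
    intro v
    rw [hgeq]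
    have h1 := HasFDerivAt.comp (g := F1) v (hF1 (θ + v)) (htrans v)
    have h2 := h1.const_sub (F1 θ)
    rw [ContinuousLinearMap.comp_id] at h2
    exact h2
  have hgdiff : Differentiable ℝ g := fun v => (hg' v).differentiableAt
  have hfd : fderiv ℝ g = fun v => -(F1' (θ + v)) := funext fun v => (hg' v).fderiv
  have hg'0 : fderiv ℝ g 0 = 0 := by rw [hfd]; simp [hF1'θ]
  have hg0 : g 0 = 0 := by
    rw [hgeq]; simp
  set B : (Fin d → ℝ) →L[ℝ] ((Fin d → ℝ) →L[ℝ] ℝ) := -B0 with hBdef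
  have hB : HasFDerivAt (fderiv ℝ g) B 0 := by
    rw [hfd]
    have hF1''0 : HasFDerivAt F1' B0 (θ + 0) := by rwa [add_zero]
    have h1 := HasFDerivAt.comp (g := F1') 0 hF1''0 (htrans 0)
    have h2 := h1.neg
    rw [ContinuousLinearMap.comp_id] at h2
    exact h2
  have hBvw : ∀ v w, B v w = ∑ y, (q y)⁻¹ * (D y θ v * D y θ w) := by
    intro v w
    rw [hBdef, hB0def]
    simp only [ContinuousLinearMap.neg_apply, ContinuousLinearMap.coe_sum',
      Finset.sum_apply, ContinuousLinearMap.smulRight_apply,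
      ContinuousLinearMap.coe_smul', Pi.smul_apply, smul_eq_mul, ← Finset.sum_neg_distrib]
    apply Finset.sum_congr rfl
    intro y _
    ring
  have hsymm : ∀ v w, B v w = B w v := by
    intro v w
    rw [hBvw, hBvw]
    apply Finset.sum_congr rfl
    intro y _
    ring
  have main := peano_quadratic g B hgdiff hg0 hg'0 hB hsymm
  -- identify the quadratic form with the Fisher matrix
  have hL : ∀ y, fderiv ℝ (fun θ' => Real.log (p θ' y)) θ = (q y)⁻¹ • D y θ :=
    fun y => ((hD y θ).log (hp_pos θ y).ne').fderiv
  have hexp : ∀ (y : Fin n) (v : Fin d → ℝ),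
      D y θ v = ∑ i, v i * D y θ (Pi.single i 1) := by
    intro y v
    have hsingle : ∀ i : Fin d, (fun j => if i = j then (1:ℝ) else 0) = Pi.single i 1 := by
      intro i
      funext j
      simp [Pi.single_apply, eq_comm]
    have h := (D y θ : (Fin d → ℝ) →ₗ[ℝ] ℝ).pi_apply_eq_sum_univ v
    simp only [smul_eq_mul, hsingle] at h
    exact h
  have hquad : ∀ v : Fin d → ℝ, v ⬝ᵥ (fisherMatrix p θ *ᵥ v) = B v v := by
    intro v
    have hFentry : ∀ i j, fisherMatrix p θ i j =
        ∑ y, (q y)⁻¹ * (D y θ (Pi.single i 1) * D y θ (Pi.single j 1)) := by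
      intro i j
      simp only [fisherMatrix, Matrix.of_apply]
      apply Finset.sum_congr rfl
      intro y _
      rw [hL y]
      simp only [ContinuousLinearMap.coe_smul', Pi.smul_apply, smul_eq_mul]
      have hne : p θ y ≠ 0 := (hp_pos θ y).ne'
      field_simp
      rw [show p θ y = q y from rfl, div_eq_div_iff (pow_ne_zero 2 (hq0 y)) (hq0 y)]
      ring
    rw [hBvw]
    simp only [dotProduct, Matrix.mulVec, hFentry]
    calc ∑ i, v i * ∑ j, (∑ y, (q y)⁻¹ * (D y θ (Pi.single i 1) * D y θ (Pi.single j 1))) * v j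
        = ∑ i, ∑ j, ∑ y, v i * ((q y)⁻¹ * (D y θ (Pi.single i 1) * D y θ (Pi.single j 1))) * v j := by
          simp only [Finset.mul_sum, Finset.sum_mul]
          apply Finset.sum_congr rfl; intro i _
          apply Finset.sum_congr rfl; intro j _
          apply Finset.sum_congr rfl; intro y _
          ring
      _ = ∑ i, ∑ y, ∑ j, v i * ((q y)⁻¹ * (D y θ (Pi.single i 1) * D y θ (Pi.single j 1))) * v j :=
          Finset.sum_congr rfl (fun i _ => Finset.sum_comm)
      _ = ∑ y, ∑ i, ∑ j, v i * ((q y)⁻¹ * (D y θ (Pi.single i 1) * D y θ (Pi.single j 1))) * v j :=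
          Finset.sum_comm
      _ = ∑ y, (q y)⁻¹ * ((∑ i, v i * D y θ (Pi.single i 1)) * (∑ j, v j * D y θ (Pi.single j 1))) := by
          apply Finset.sum_congr rfl; intro y _
          simp only [Finset.mul_sum, Finset.sum_mul]
          apply Finset.sum_congr rfl; intro i _
          apply Finset.sum_congr rfl; intro j _
          ring
      _ = ∑ y, (q y)⁻¹ * (D y θ v * D y θ v) := by
          apply Finset.sum_congr rfl; intro y _
          rw [← hexp]
  have : (fun v : Fin d → ℝ =>
      (klDiv (p θ) (p (θ + v)) - (1 / 2) * (v ⬝ᵥ (fisherMatrix p θ *ᵥ v))) / ‖v‖ ^ 2)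
      = fun v => (g v - (1/2 : ℝ) * B v v) / ‖v‖ ^ 2 := by
    funext v
    rw [hquad v]
  rw [this]
  exact main
end

section
/- Let F_new, F_old ∈ ℝ^{p×p} be symmetric positive definite matrices, let G ∈ ℝ^{p×m} have full column rank, let g ∈ ℝ^p, set M = Gᵀ F_old F_new⁻¹ F_old G and u* = F_old G M⁻¹ Gᵀ F_old g. Then u* is the unique minimizer of u ↦ ‖g − F_new⁻¹ u‖²_{F_new} over the constraint set {u ∈ ℝ^p : F_old⁻¹ u ∈ Col(G)}, where Col(G) denotes the column space (range) of G. Moreover, g − u* = P g, where P = I − F_old G M⁻¹ Gᵀ F_old. -/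
open Matrix

private lemma dot_transpose_mulVec {p m : ℕ} (A : Matrix (Fin p) (Fin m) ℝ)
    (x : Fin m → ℝ) (w : Fin p → ℝ) :
    x ⬝ᵥ (Aᵀ *ᵥ w) = (A *ᵥ x) ⬝ᵥ w := by
  rw [dotProduct_mulVec, vecMul_transpose]

private lemma quadform_eq {p m : ℕ} (A : Matrix (Fin p) (Fin m) ℝ)
    (Q : Matrix (Fin p) (Fin p) ℝ) (x : Fin m → ℝ) :
    x ⬝ᵥ ((Aᵀ * Q * A) *ᵥ x) = (A *ᵥ x) ⬝ᵥ (Q *ᵥ (A *ᵥ x)) := by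
  rw [← mulVec_mulVec, ← mulVec_mulVec, dot_transpose_mulVec]

/-- Constrained-minimizer claim of the FOPNG update (Theorem 3):
`u* = F_old G M⁻¹ Gᵀ F_old g` is the unique minimizer of
`u ↦ ‖g − F_new⁻¹ u‖²_{F_new}` over `{u : F_old⁻¹ u ∈ Col(G)}`, and
`g − u* = P g` with `P = I − F_old G M⁻¹ Gᵀ F_old`. -/
theorem fopng_constrained_minimizer {p m : ℕ}
    (Fnew Fold : Matrix (Fin p) (Fin p) ℝ)
    (hFnew : Fnew.PosDef) (hFold : Fold.PosDef)
    (G : Matrix (Fin p) (Fin m) ℝ)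
    (hG : Function.Injective G.mulVec)
    (g : Fin p → ℝ) :
    let M := Gᵀ * Fold * Fnew⁻¹ * Fold * G
    let ustar := Fold *ᵥ (G *ᵥ (M⁻¹ *ᵥ (Gᵀ *ᵥ (Fold *ᵥ g))))
    let obj : (Fin p → ℝ) → ℝ := fun u =>
      (g - Fnew⁻¹ *ᵥ u) ⬝ᵥ (Fnew *ᵥ (g - Fnew⁻¹ *ᵥ u))
    let S : Set (Fin p → ℝ) := {u | Fold⁻¹ *ᵥ u ∈ Set.range G.mulVec}
    let P := (1 : Matrix (Fin p) (Fin p) ℝ) - Fold * G * M⁻¹ * Gᵀ * Fold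
    ustar ∈ S ∧ (∀ u ∈ S, obj ustar ≤ obj u) ∧
      (∀ u ∈ S, obj u = obj ustar → u = ustar) ∧
      g - ustar = P *ᵥ g := by
  intro M ustar obj S P
  -- basic symmetry facts
  have hFoT : Foldᵀ = Fold := by
    have h := hFold.isHermitian
    rwa [Matrix.IsHermitian, conjTranspose_eq_transpose_of_trivial] at h
  have hFnT : Fnewᵀ = Fnew := by
    have h := hFnew.isHermitian
    rwa [Matrix.IsHermitian, conjTranspose_eq_transpose_of_trivial] at h
  have hQpd : (Fnew⁻¹).PosDef := hFnew.inv
  have hQT : (Fnew⁻¹)ᵀ = Fnew⁻¹ := by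
    have h := hQpd.isHermitian
    rwa [Matrix.IsHermitian, conjTranspose_eq_transpose_of_trivial] at h
  -- invertibility
  have hFnd : IsUnit Fnew.det := isUnit_iff_ne_zero.2 hFnew.det_pos.ne'
  have hFod : IsUnit Fold.det := isUnit_iff_ne_zero.2 hFold.det_pos.ne'
  have hFnQ : Fnew * Fnew⁻¹ = 1 := Matrix.mul_nonsing_inv _ hFnd
  have hFoInv : Fold * Fold⁻¹ = 1 := Matrix.mul_nonsing_inv _ hFod
  have hInvFo : Fold⁻¹ * Fold = 1 := Matrix.nonsing_inv_mul _ hFod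
  -- the matrix A = Fold * G (opaque)
  obtain ⟨A, hA⟩ : ∃ A : Matrix (Fin p) (Fin m) ℝ, A = Fold * G := ⟨_, rfl⟩
  have hAT : Aᵀ = Gᵀ * Fold := by rw [hA, transpose_mul, hFoT]
  have hAv : ∀ x, A *ᵥ x = Fold *ᵥ (G *ᵥ x) := by
    intro x; rw [hA, ← mulVec_mulVec]
  have hA_inj : Function.Injective A.mulVec := by
    intro x y hxy
    have hxy' : Fold *ᵥ (G *ᵥ x) = Fold *ᵥ (G *ᵥ y) := by
      rw [← hAv, ← hAv]; exact hxy
    exact hG (Matrix.mulVec_injective_iff_isUnit.2 hFold.isUnit hxy')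
  have hM_eq : M = Aᵀ * Fnew⁻¹ * A := by
    show Gᵀ * Fold * Fnew⁻¹ * Fold * G = _
    rw [hAT, hA, Matrix.mul_assoc (Gᵀ * Fold * Fnew⁻¹)]
  -- M is positive definite
  have hMpd : M.PosDef := by
    refine Matrix.PosDef.of_dotProduct_mulVec_pos ?_ ?_
    · show Mᴴ = M
      rw [conjTranspose_eq_transpose_of_trivial, hM_eq]
      simp [transpose_mul, hQT, Matrix.mul_assoc]
    · intro x hx
      have hAx : A *ᵥ x ≠ 0 := by
        intro h0
        exact hx (hA_inj (by simpa using h0))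
      have := hQpd.dotProduct_mulVec_pos hAx
      simpa [hM_eq, quadform_eq] using this
  have hMd : IsUnit M.det := isUnit_iff_ne_zero.2 hMpd.det_pos.ne'
  have hMMinv : M * M⁻¹ = 1 := Matrix.mul_nonsing_inv _ hMd
  -- membership characterization of S
  have hS : ∀ u, u ∈ S ↔ ∃ α, u = A *ᵥ α := by
    intro u
    constructor
    · rintro ⟨α, hα⟩
      refine ⟨α, ?_⟩
      have h1 : Fold *ᵥ (Fold⁻¹ *ᵥ u) = Fold *ᵥ (G *ᵥ α) := by rw [hα]
      rw [mulVec_mulVec, hFoInv, one_mulVec, ← hAv] at h1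
      exact h1
    · rintro ⟨α, rfl⟩
      exact ⟨α, by rw [hAv, mulVec_mulVec, hInvFo, one_mulVec]⟩
  -- the optimal coefficient
  obtain ⟨αstar, hαstar⟩ : ∃ a : Fin m → ℝ, a = M⁻¹ *ᵥ (Aᵀ *ᵥ g) := ⟨_, rfl⟩
  have hustar : ustar = A *ᵥ αstar := by
    show Fold *ᵥ (G *ᵥ (M⁻¹ *ᵥ (Gᵀ *ᵥ (Fold *ᵥ g)))) = _
    rw [hAv, hαstar, hAT, ← mulVec_mulVec g Gᵀ Fold]
  have hMαstar : M *ᵥ αstar = Aᵀ *ᵥ g := by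
    rw [hαstar, mulVec_mulVec, hMMinv, one_mulVec]
  -- orthogonality of residual
  have horth : Aᵀ *ᵥ (g - Fnew⁻¹ *ᵥ ustar) = 0 := by
    have h1 : Aᵀ *ᵥ (Fnew⁻¹ *ᵥ ustar) = Aᵀ *ᵥ g := by
      rw [hustar, mulVec_mulVec, mulVec_mulVec, ← hM_eq, hMαstar]
    rw [mulVec_sub, h1, sub_self]
  -- key decomposition of the objective
  have hdecomp : ∀ α : Fin m → ℝ,
      obj (A *ᵥ α) = obj ustar + (α - αstar) ⬝ᵥ (M *ᵥ (α - αstar)) := by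
    intro α
    obtain ⟨e, he⟩ : ∃ e : Fin p → ℝ, e = g - Fnew⁻¹ *ᵥ ustar := ⟨_, rfl⟩
    obtain ⟨d, hd⟩ : ∃ d : Fin m → ℝ, d = α - αstar := ⟨_, rfl⟩
    have horth' : Aᵀ *ᵥ e = 0 := by rw [he]; exact horth
    have hsplit : g - Fnew⁻¹ *ᵥ (A *ᵥ α) = e - Fnew⁻¹ *ᵥ (A *ᵥ d) := by
      rw [he, hd, mulVec_sub, mulVec_sub, hustar]
      abel
    have hFQ : ∀ x : Fin p → ℝ, Fnew *ᵥ (Fnew⁻¹ *ᵥ x) = x := by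
      intro x; rw [mulVec_mulVec, hFnQ, one_mulVec]
    have hcross : e ⬝ᵥ (A *ᵥ d) = 0 := by
      rw [dotProduct_comm, ← dot_transpose_mulVec, horth', dotProduct_zero]
    have hquad : (Fnew⁻¹ *ᵥ (A *ᵥ d)) ⬝ᵥ (A *ᵥ d) = d ⬝ᵥ (M *ᵥ d) := by
      rw [hM_eq, quadform_eq]
      exact dotProduct_comm _ _
    have hcross2 : (Fnew⁻¹ *ᵥ (A *ᵥ d)) ⬝ᵥ (Fnew *ᵥ e) = 0 := by
      rw [dotProduct_mulVec, ← mulVec_transpose, hFnT, hFQ, dotProduct_comm, hcross]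
    show (g - Fnew⁻¹ *ᵥ (A *ᵥ α)) ⬝ᵥ (Fnew *ᵥ (g - Fnew⁻¹ *ᵥ (A *ᵥ α)))
        = (g - Fnew⁻¹ *ᵥ ustar) ⬝ᵥ (Fnew *ᵥ (g - Fnew⁻¹ *ᵥ ustar)) + (α - αstar) ⬝ᵥ (M *ᵥ (α - αstar))
    rw [← he, ← hd, hsplit, mulVec_sub, dotProduct_sub, sub_dotProduct, sub_dotProduct,
      hFQ, hcross, hcross2, hquad]
    ring
  have hustarS : ustar ∈ S := (hS ustar).2 ⟨αstar, hustar⟩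
  refine ⟨hustarS, ?_, ?_, ?_⟩
  · intro u hu
    obtain ⟨α, rfl⟩ := (hS u).1 hu
    rw [hdecomp]
    have h0 : 0 ≤ (α - αstar) ⬝ᵥ (M *ᵥ (α - αstar)) := by
      have := hMpd.posSemidef.dotProduct_mulVec_nonneg (α - αstar)
      simpa using this
    linarith
  · intro u hu hobju
    obtain ⟨α, rfl⟩ := (hS u).1 hu
    rw [hdecomp] at hobju
    have h0 : (α - αstar) ⬝ᵥ (M *ᵥ (α - αstar)) = 0 := by linarith
    have hαeq : α = αstar := by
      by_contra hne
      have := hMpd.dotProduct_mulVec_pos (sub_ne_zero.2 hne)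
      simp only [star_trivial] at this
      linarith
    rw [hαeq, ← hustar]
  · show g - ustar = P *ᵥ g
    have hu2 : ustar = (Fold * G * M⁻¹ * Gᵀ * Fold) *ᵥ g := by
      show Fold *ᵥ (G *ᵥ (M⁻¹ *ᵥ (Gᵀ *ᵥ (Fold *ᵥ g)))) = _
      simp [mulVec_mulVec, Matrix.mul_assoc]
    rw [hu2]
    show _ = ((1 : Matrix (Fin p) (Fin p) ℝ) - Fold * G * M⁻¹ * Gᵀ * Fold) *ᵥ g
    rw [sub_mulVec, one_mulVec]
end
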